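/- Let Δ₀ be a dyadic cube in 𝔾^d and E a Borel set with μ(Δ₀ ∩ E)/μ(Δ₀) > 1 - 2^{-ld}. Fix k₁ > ... > k_l at least the rank of Δ₀. Then the intersection over all choices of σ^1, ..., σ^l ∈ {0,1}^d of the translates (Δ₀ ∩ E) ⊕ (⊕_{i=1}^l e^{σ^i}_{k_i}) has positive Haar measure; in particular it is nonempty. -/

import Mathlib

/-!
The offsets `⊕ e^{σ^i}_{k_i}` vanish in the first `s` coordinates, so translating by them
maps the cube `Δ₀` of rank `s` onto itself. By translation invariance each translate of
`Δ₀ ∩ E` therefore misses exactly `μ(Δ₀ \ E)` of `Δ₀`, and a union bound over the `2^{ld}`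
translates shows that their intersection misses at most `2^{ld} μ(Δ₀ \ E)`, which the
density hypothesis makes smaller than `μ(Δ₀)`.
-/

open MeasureTheory
open scoped ENNReal

/-- The dyadic group `𝔾`: 0-1 sequences with coordinatewise addition mod 2. -/
abbrev DyadicGroup : Type := ℕ → ZMod 2

/-- The dyadic cube of rank `s` in `𝔾^d` with base point `m`. -/
def dyadicCube (d s : ℕ) (m : Fin d → DyadicGroup) : Set (Fin d → DyadicGroup) :=
  {g | ∀ l : Fin d, ∀ j < s, g l j = m l j}

/-- The element `⊕_{i=1}^{l} e^{σ^i}_{k_i}` of `𝔾^d`, where `e^σ_k` has `j`-th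
component `σ_j e_k` (`e_k` being the `k`-th generator of `𝔾`). -/
def offset {d l : ℕ} (k : Fin l → ℕ) (σ : Fin l → Fin d → ZMod 2) :
    Fin d → DyadicGroup :=
  fun i t => ∑ u, if t = k u then σ u i else 0

theorem mul_measure_sdiff_lt_of_density {α : Type*} [MeasurableSpace α] {μ : Measure α}
    {s t : Set α} (ht : MeasurableSet t) {n : ℕ} (hn : n ≠ 0)
    (h : 1 - 1 / (n : ℝ≥0∞) < μ (s ∩ t) / μ s) : n * μ (s \ t) < μ s := by
  -- `0 / 0 = 0` and `a / ∞ = 0` in `ℝ≥0∞`, so the hypothesis forces `0 < μ s < ∞`.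
  have hs0 : μ s ≠ 0 := by
    intro h0
    rw [h0, measure_mono_null Set.inter_subset_left h0, ENNReal.zero_div] at h
    exact not_lt_zero h
  have hstop : μ s ≠ ∞ := by
    intro htop
    rw [htop, ENNReal.div_top] at h
    exact not_lt_zero h
  have hinter : μ (s ∩ t) = μ s - μ (s \ t) :=
    ENNReal.eq_sub_of_add_eq (measure_ne_top_of_subset Set.sdiff_subset hstop)
      (measure_inter_add_sdiff s ht)
  have hdiff : μ (s \ t) < (n : ℝ≥0∞)⁻¹ * μ s := by
    rw [one_div, ENNReal.lt_div_iff_mul_lt (.inl hs0) (.inl hstop),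
      ENNReal.sub_mul fun _ _ => hstop, one_mul, hinter] at h
    exact lt_of_tsub_lt_tsub_left h
  have hn0 : (n : ℝ≥0∞) ≠ 0 := Nat.cast_ne_zero.2 hn
  calc n * μ (s \ t) < n * ((n : ℝ≥0∞)⁻¹ * μ s) :=
        ENNReal.mul_lt_mul_right hn0 (ENNReal.natCast_ne_top n) hdiff
    _ = μ s := by
        rw [← mul_assoc, ENNReal.mul_inv_cancel hn0 (ENNReal.natCast_ne_top n), one_mul]

theorem measure_inter_iInter_pos_of_sum_measure_sdiff_lt {α ι : Type*} [MeasurableSpace α]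
    [Fintype ι] {μ : Measure α} {s : Set α} {t : ι → Set α}
    (h : ∑ i, μ (s \ t i) < μ s) : 0 < μ (s ∩ ⋂ i, t i) := by
  refine pos_iff_ne_zero.2 fun h0 => (measure_le_inter_add_sdiff μ s (⋂ i, t i)).not_gt ?_
  calc μ (s ∩ ⋂ i, t i) + μ (s \ ⋂ i, t i) = μ (⋃ i, s \ t i) := by
        rw [h0, zero_add, Set.sdiff_iInter]
    _ ≤ ∑ i, μ (s \ t i) := measure_iUnion_fintype_le μ _
    _ < μ s := h

theorem measure_sdiff_image_add_right {G : Type*} [MeasurableSpace G] [AddGroup G]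
    [MeasurableAdd G] (μ : Measure G) [μ.IsAddRightInvariant] {s t : Set G} {x : G}
    (hs : ∀ g, g + x ∈ s ↔ g ∈ s) : μ (s \ (· + x) '' t) = μ (s \ t) := by
  have hs' : (· + -x) ⁻¹' s = s := by
    ext g
    rw [Set.mem_preimage, ← hs, neg_add_cancel_right]
  rw [Set.image_add_right]
  nth_rw 1 [← hs']
  rw [← Set.preimage_sdiff, measure_preimage_add_right]

theorem add_mem_dyadicCube_iff {d s : ℕ} {m x g : Fin d → DyadicGroup}
    (hx : ∀ i, ∀ j < s, x i j = 0) : g + x ∈ dyadicCube d s m ↔ g ∈ dyadicCube d s m := by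
  simp only [dyadicCube, Set.mem_ofPred_eq, Pi.add_apply]
  exact forall_congr' fun i => forall₂_congr fun j hj => by rw [hx i j hj, add_zero]

theorem offset_apply_of_lt {d l s : ℕ} {k : Fin l → ℕ} (hks : ∀ i, s ≤ k i)
    (σ : Fin l → Fin d → ZMod 2) (i : Fin d) {j : ℕ} (hj : j < s) : offset k σ i j = 0 :=
  Finset.sum_eq_zero fun u _ => if_neg (hj.trans_le (hks u)).ne

theorem translates_intersection_pos_general (d : ℕ) (μ : Measure (Fin d → DyadicGroup))
    (hinv : ∀ x : Fin d → DyadicGroup, Measure.map (fun g => x + g) μ = μ)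
    (s : ℕ) (m : Fin d → DyadicGroup) (E : Set (Fin d → DyadicGroup))
    (hEmeas : MeasurableSet E) (l : ℕ)
    (hdens : 1 - 1 / 2 ^ (l * d)
      < μ (dyadicCube d s m ∩ E) / μ (dyadicCube d s m))
    (k : Fin l → ℕ) (hks : ∀ i, s ≤ k i) :
    0 < μ (⋂ σ : Fin l → Fin d → ZMod 2,
        (fun a => a + offset k σ) '' (dyadicCube d s m ∩ E)) ∧
    (⋂ σ : Fin l → Fin d → ZMod 2,
        (fun a => a + offset k σ) '' (dyadicCube d s m ∩ E)).Nonempty := by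
  have : μ.IsAddLeftInvariant := ⟨hinv⟩
  set Δ := dyadicCube d s m
  set N := Fintype.card (Fin l → Fin d → ZMod 2)
  have hN : (N : ℝ≥0∞) = 2 ^ (l * d) := by
    simp [N, ← pow_mul, mul_comm d l]
  have hsmall : N * μ (Δ \ E) < μ Δ :=
    mul_measure_sdiff_lt_of_density hEmeas Fintype.card_ne_zero (by rwa [hN])
  have hcore : 0 < μ (Δ ∩ ⋂ σ : Fin l → Fin d → ZMod 2, (· + offset k σ) '' (Δ ∩ E)) := by
    refine measure_inter_iInter_pos_of_sum_measure_sdiff_lt ?_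
    calc ∑ σ : Fin l → Fin d → ZMod 2, μ (Δ \ (· + offset k σ) '' (Δ ∩ E))
        = ∑ _σ : Fin l → Fin d → ZMod 2, μ (Δ \ E) := by
          refine Finset.sum_congr rfl fun σ _ => ?_
          rw [measure_sdiff_image_add_right μ fun g =>
            add_mem_dyadicCube_iff (offset_apply_of_lt hks σ), Set.sdiff_self_inter]
      _ = N * μ (Δ \ E) := by simp [N]
      _ < μ Δ := hsmall
  have hpos := hcore.trans_le (measure_mono Set.inter_subset_right)
  exact ⟨hpos, nonempty_of_measure_ne_zero hpos.ne'⟩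

/-- Let `μ` be the normalized Haar measure on `𝔾^d` (characterized as a
translation-invariant Borel probability measure), `Δ₀` a dyadic cube of rank
`s`, and `E` a Borel set with `μ(Δ₀ ∩ E)/μ(Δ₀) > 1 − 2^{−ld}`.  Fix
`k₁ > … > k_l ≥ s`.  Then the intersection, over all `σ¹, …, σˡ ∈ {0,1}^d`,
of the translates `(Δ₀ ∩ E) ⊕ (⊕_{i=1}^l e^{σ^i}_{k_i})` has positive
measure; in particular it is nonempty. -/
theorem translates_intersection_pos (d : ℕ) (μ : Measure (Fin d → DyadicGroup))
    (hμ1 : μ Set.univ = 1)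
    (hinv : ∀ x : Fin d → DyadicGroup, Measure.map (fun g => x + g) μ = μ)
    (s : ℕ) (m : Fin d → DyadicGroup) (E : Set (Fin d → DyadicGroup))
    (hEmeas : MeasurableSet E) (l : ℕ)
    (hdens : 1 - 1 / 2 ^ (l * d)
      < μ (dyadicCube d s m ∩ E) / μ (dyadicCube d s m))
    (k : Fin l → ℕ) (hk : StrictAnti k) (hks : ∀ i, s ≤ k i) :
    0 < μ (⋂ σ : Fin l → Fin d → ZMod 2,
        (fun a => a + offset k σ) '' (dyadicCube d s m ∩ E)) ∧
    (⋂ σ : Fin l → Fin d → ZMod 2,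
        (fun a => a + offset k σ) '' (dyadicCube d s m ∩ E)).Nonempty :=
  translates_intersection_pos_general d μ hinv s m E hEmeas l hdens k hks
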